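/- Let 𝔛 be a Bourgain–Delbaen space with constant C = sup_q ‖i_q‖, and for γ ∈ Γ let e_γ* : 𝔛 → ℝ denote the evaluation functional x ↦ x(γ). Then (e_γ*)_{γ∈Γ} is C-equivalent to the unit vector basis of ℓ1(Γ): for every finite subset A of Γ and all scalars (λ_γ)_{γ∈A}, C⁻¹ ∑_{γ∈A} |λ_γ| ≤ ‖∑_{γ∈A} λ_γ e_γ*‖ ≤ ∑_{γ∈A} |λ_γ|. -/

import Mathlib

open scoped ENNReal
open Filter Topology

set_option maxHeartbeats 1000000
set_option synthInstance.maxHeartbeats 400000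

noncomputable section

/-- `ℓ∞(Γ)`. -/
abbrev Linf (Γ : Type*) : Type _ := lp (fun _ : Γ => ℝ) ∞

namespace BD

variable {Γ : Type*}

/-- The evaluation map on `ℓ∞(Γ)`, as a linear map. -/
def evalLM (γ : Γ) : Linf Γ →ₗ[ℝ] ℝ where
  toFun f := f γ
  map_add' f g := by simp
  map_smul' c f := by simp

/-- The evaluation functional `e_γ^*` on `ℓ∞(Γ)`. -/
def evalL (γ : Γ) : Linf Γ →L[ℝ] ℝ :=
  LinearMap.mkContinuous (evalLM γ) 1 fun f => by
    rw [one_mul]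
    exact lp.norm_apply_le_norm ENNReal.top_ne_zero f γ

/-- The restriction map `ℓ∞(Γ) → ℓ∞(A)`, as a linear map. -/
def restrLM (A : Finset Γ) : Linf Γ →ₗ[ℝ] (↥A → ℝ) where
  toFun f γ := f γ.1
  map_add' f g := by ext γ; simp
  map_smul' c f := by ext γ; simp

/-- The restriction operator `r_A : ℓ∞(Γ) → ℓ∞(A)` for a finite set `A ⊆ Γ`. -/
def restrCLM (A : Finset Γ) : Linf Γ →L[ℝ] (↥A → ℝ) :=
  LinearMap.mkContinuous (restrLM A) 1 fun f => by
    rw [one_mul]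
    refine (pi_norm_le_iff_of_nonneg (norm_nonneg f)).2 fun γ => ?_
    exact lp.norm_apply_le_norm ENNReal.top_ne_zero f γ.1

/-- The data defining a Bourgain-Delbaen space: a strictly increasing sequence of
nonempty finite subsets of `Γ` covering `Γ`, together with a uniformly bounded compatible
sequence of extension operators. -/
structure System (Γ : Type*) where
  Γs : ℕ → Finset Γ
  strict : StrictMono Γs
  nonempty : ∀ q, (Γs q).Nonempty
  covers : ∀ γ : Γ, ∃ q, γ ∈ Γs q
  i : ∀ q, (↥(Γs q) → ℝ) →L[ℝ] Linf Γ
  extension : ∀ q (x : ↥(Γs q) → ℝ) (γ : ↥(Γs q)), i q x γ.1 = x γ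
  compat : ∀ p q, p < q → ∀ x : ↥(Γs p) → ℝ, i p x = i q (restrCLM (Γs q) (i p x))
  bdd : BddAbove (Set.range fun q => ‖i q‖)

/-- `C = sup_q ‖i_q‖`. -/
def System.C (S : System Γ) : ℝ := ⨆ q, ‖S.i q‖

/-- `Δ_0 = Γ_0`, `Δ_q = Γ_q \ Γ_{q-1}`. -/
def System.Δ (S : System Γ) : ℕ → Finset Γ := fun q =>
  letI := Classical.decEq Γ
  match q with
  | 0 => S.Γs 0
  | q + 1 => S.Γs (q + 1) \ S.Γs q

/-- The unique `q` with `γ ∈ Δ_q`. -/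
def System.rk (S : System Γ) (γ : Γ) : ℕ :=
  letI := Classical.decEq Γ
  Nat.find (S.covers γ)

/-- The vector `d_γ = i_q (e_γ)` for `γ ∈ Δ_q`. -/
def System.dvec (S : System Γ) (γ : Γ) : Linf Γ :=
  letI := Classical.decEq Γ
  S.i (S.rk γ) fun δ => if (δ : Γ) = γ then 1 else 0

/-- `M_q = span {d_γ : γ ∈ Δ_q}`. -/
def System.M (S : System Γ) (q : ℕ) : Submodule ℝ (Linf Γ) :=
  Submodule.span ℝ (S.dvec '' (S.Δ q : Set Γ))

/-- The Bourgain-Delbaen space: the closed linear span of the `d_γ`'s in `ℓ∞(Γ)`. -/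
def System.space (S : System Γ) : Submodule ℝ (Linf Γ) :=
  (Submodule.span ℝ (Set.range S.dvec)).topologicalClosure


section ShortcutInstances

noncomputable instance (priority := 10000) instLinfNACG (Γ : Type*) :
    NormedAddCommGroup (Linf Γ) := inferInstance

noncomputable instance (priority := 10000) instLinfNS (Γ : Type*) :
    NormedSpace ℝ (Linf Γ) := inferInstance

noncomputable instance (priority := 10000) instSpaceNACG (S : System Γ) :
    NormedAddCommGroup ↥S.space := inferInstance

noncomputable instance (priority := 10000) instSpaceNS (S : System Γ) :
    NormedSpace ℝ ↥S.space := inferInstance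

noncomputable instance (priority := 10000) instDualNACG (S : System Γ) :
    NormedAddCommGroup (↥S.space →L[ℝ] ℝ) := inferInstance

noncomputable instance (priority := 10000) instDualNS (S : System Γ) :
    NormedSpace ℝ (↥S.space →L[ℝ] ℝ) := inferInstance

end ShortcutInstances

lemma dvec_mem (S : System Γ) (γ : Γ) : S.dvec γ ∈ S.space :=
  Submodule.le_topologicalClosure _ (Submodule.subset_span ⟨γ, rfl⟩)

end BD

/-- The evaluation functional `e_γ^*` restricted to the Bourgain–Delbaen space. -/
def BD.evalS {Γ : Type*} (S : BD.System Γ) (γ : Γ) : ↥S.space →L[ℝ] ℝ :=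
  (BD.evalL γ).comp S.space.subtypeL

/-! The upper estimate holds because each `e_γ^*` has norm at most `1`. For the lower one, put
all of `A` inside some `Γ_q` and test `∑ λ_γ e_γ^*` against `i_q(sign λ)`, which has norm at most
`C` and takes the value `sign λ_γ` at each `γ ∈ A`. That vector lies in `𝔛`: by compatibility,
`i_{q+1} y - i_q (y|_{Γ_q})` is the image under `i_{q+1}` of a vector supported on `Δ_{q+1}`,
hence a combination of the `d_γ`, so by induction every `i_q` maps into `span {d_γ}`. -/

namespace BD

namespace System

variable {Γ : Type*} (S : System Γ)

lemma mem_Γs_rk (γ : Γ) : γ ∈ S.Γs (S.rk γ) := by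
  classical
  exact Nat.find_spec (S.covers γ)

lemma mem_Δ_succ_iff {γ : Γ} {q : ℕ} : γ ∈ S.Δ (q + 1) ↔ γ ∈ S.Γs (q + 1) ∧ γ ∉ S.Γs q := by
  classical
  exact Finset.mem_sdiff

lemma mem_Γs_of_mem_Δ {γ : Γ} : ∀ {q : ℕ}, γ ∈ S.Δ q → γ ∈ S.Γs q
  | 0, h => h
  | _ + 1, h => ((S.mem_Δ_succ_iff).1 h).1

lemma rk_eq_of_mem_Δ {γ : Γ} {q : ℕ} (h : γ ∈ S.Δ q) : S.rk γ = q := by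
  classical
  rw [rk, Nat.find_eq_iff]
  refine ⟨S.mem_Γs_of_mem_Δ h, fun n hn hγ => ?_⟩
  obtain _ | q := q
  · exact Nat.not_lt_zero n hn
  · exact ((S.mem_Δ_succ_iff).1 h).2 (S.strict.monotone (Nat.le_of_lt_succ hn) hγ)

lemma i_indicator_eq_dvec {q : ℕ} [DecidableEq (S.Γs q)] {γ : Γ} (h : γ ∈ S.Δ q) :
    S.i q (fun δ => if ⟨γ, S.mem_Γs_of_mem_Δ h⟩ = δ then 1 else 0) = S.dvec γ := by
  rw [dvec, S.rk_eq_of_mem_Δ h]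
  congr 1
  funext δ
  congr 1
  simp [Subtype.ext_iff, eq_comm]

lemma i_mem_span_of_eq_zero_off_Δ (q : ℕ) (y : S.Γs q → ℝ)
    (hy : ∀ δ : S.Γs q, (δ : Γ) ∉ S.Δ q → y δ = 0) :
    S.i q y ∈ Submodule.span ℝ (Set.range S.dvec) := by
  classical
  rw [← ContinuousLinearMap.coe_coe, LinearMap.pi_apply_eq_sum_univ]
  refine Submodule.sum_mem _ fun δ _ => ?_
  by_cases hδ : (δ : Γ) ∈ S.Δ q
  · rw [ContinuousLinearMap.coe_coe, S.i_indicator_eq_dvec hδ]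
    exact Submodule.smul_mem _ _ (Submodule.subset_span ⟨δ, rfl⟩)
  · simp [hy δ hδ]

lemma i_mem_span (q : ℕ) (y : S.Γs q → ℝ) :
    S.i q y ∈ Submodule.span ℝ (Set.range S.dvec) := by
  induction q with
  | zero => exact S.i_mem_span_of_eq_zero_off_Δ 0 y fun δ hδ => absurd δ.2 hδ
  | succ q ih =>
    have hsub : S.Γs q ⊆ S.Γs (q + 1) := S.strict.monotone q.le_succ
    set u : S.Γs q → ℝ := fun δ => y ⟨δ, hsub δ.2⟩
    set v : S.Γs (q + 1) → ℝ := y - restrCLM (S.Γs (q + 1)) (S.i q u)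
    have hdecomp : S.i (q + 1) y = S.i q u + S.i (q + 1) v := by
      rw [map_sub, ← S.compat q (q + 1) q.lt_succ_self u, add_sub_cancel]
    have hv : ∀ δ : S.Γs (q + 1), (δ : Γ) ∉ S.Δ (q + 1) → v δ = 0 := by
      intro δ hδ
      have hδq : (δ : Γ) ∈ S.Γs q := by
        by_contra h
        exact hδ ((S.mem_Δ_succ_iff).2 ⟨δ.2, h⟩)
      show y δ - S.i q u δ = 0
      rw [S.extension q u ⟨δ, hδq⟩, sub_self]
    rw [hdecomp]
    exact Submodule.add_mem _ (ih u) (S.i_mem_span_of_eq_zero_off_Δ _ v hv)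

lemma i_mem_space (q : ℕ) (y : S.Γs q → ℝ) : S.i q y ∈ S.space :=
  Submodule.le_topologicalClosure _ (S.i_mem_span q y)

lemma norm_i_le_C (q : ℕ) : ‖S.i q‖ ≤ S.C :=
  le_ciSup S.bdd q

lemma C_nonneg : 0 ≤ S.C :=
  (norm_nonneg _).trans (S.norm_i_le_C 0)

lemma exists_norm_le_C_eq_on (A : Finset Γ) (ε : Γ → ℝ) (hε : ∀ γ, |ε γ| ≤ 1) :
    ∃ x : S.space, ‖x‖ ≤ S.C ∧ ∀ γ ∈ A, (x : Linf Γ) γ = ε γ := by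
  obtain ⟨q, hA⟩ : ∃ q, A ⊆ S.Γs q :=
    ⟨A.sup S.rk, fun γ hγ => S.strict.monotone (Finset.le_sup hγ) (S.mem_Γs_rk γ)⟩
  let y : S.Γs q → ℝ := fun δ => ε δ
  have hy : ‖y‖ ≤ 1 := (pi_norm_le_iff_of_nonneg zero_le_one).2 fun δ => hε δ
  refine ⟨⟨S.i q y, S.i_mem_space q y⟩, ?_, fun γ hγ => S.extension q y ⟨γ, hA hγ⟩⟩
  calc ‖S.i q y‖ ≤ ‖S.i q‖ * ‖y‖ := (S.i q).le_opNorm y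
    _ ≤ ‖S.i q‖ := mul_le_of_le_one_right (norm_nonneg _) hy
    _ ≤ S.C := S.norm_i_le_C q

end System

lemma norm_evalS_le_one {Γ : Type*} (S : System Γ) (γ : Γ) : ‖evalS S γ‖ ≤ 1 :=
  (ContinuousLinearMap.opNorm_comp_le _ _).trans <|
    mul_le_one₀ (LinearMap.mkContinuous_norm_le _ zero_le_one _) (norm_nonneg _)
      (Submodule.norm_subtypeL_le _)

end BD

section L1Estimates

variable {ι E : Type*} [SeminormedAddCommGroup E] [NormedSpace ℝ E]

lemma norm_sum_smul_le_sum_abs (A : Finset ι) (lam : ι → ℝ) (f : ι → E)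
    (hf : ∀ i ∈ A, ‖f i‖ ≤ 1) : ‖∑ i ∈ A, lam i • f i‖ ≤ ∑ i ∈ A, |lam i| :=
  calc ‖∑ i ∈ A, lam i • f i‖ ≤ ∑ i ∈ A, ‖lam i • f i‖ := norm_sum_le _ _
    _ ≤ ∑ i ∈ A, |lam i| := Finset.sum_le_sum fun i hi => by
        rw [norm_smul, Real.norm_eq_abs]
        exact mul_le_of_le_one_right (abs_nonneg _) (hf i hi)

lemma sum_abs_le_opNorm_mul (A : Finset ι) (lam : ι → ℝ) (f : ι → E →L[ℝ] ℝ) (x : E)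
    (hx : ∀ i ∈ A, f i x = SignType.sign (lam i)) :
    ∑ i ∈ A, |lam i| ≤ ‖∑ i ∈ A, lam i • f i‖ * ‖x‖ :=
  calc ∑ i ∈ A, |lam i| = (∑ i ∈ A, lam i • f i) x := by
        rw [sum_apply]
        refine Finset.sum_congr rfl fun i hi => ?_
        rw [smul_apply, hx i hi, smul_eq_mul, self_mul_sign]
    _ ≤ ‖(∑ i ∈ A, lam i • f i) x‖ := Real.le_norm_self _
    _ ≤ ‖∑ i ∈ A, lam i • f i‖ * ‖x‖ := ContinuousLinearMap.le_opNorm _ _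

end L1Estimates

/-- In a Bourgain–Delbaen space with `C = sup_q ‖i_q‖`, the evaluation
functionals `(e_γ^*)_{γ ∈ Γ}` are `C`-equivalent to the unit vector basis of `ℓ1(Γ)`. -/
theorem statement3 {Γ : Type*} (S : BD.System Γ) :
    ∀ (A : Finset Γ) (lam : Γ → ℝ),
      S.C⁻¹ * ∑ γ ∈ A, |lam γ| ≤ ‖∑ γ ∈ A, lam γ • BD.evalS S γ‖ ∧
      ‖∑ γ ∈ A, lam γ • BD.evalS S γ‖ ≤ ∑ γ ∈ A, |lam γ| := by
  intro A lam
  refine ⟨?_, norm_sum_smul_le_sum_abs A lam _ fun γ _ => BD.norm_evalS_le_one S γ⟩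
  obtain ⟨x, hxC, hx⟩ := S.exists_norm_le_C_eq_on A (fun γ => SignType.sign (lam γ))
    fun γ => by cases SignType.sign (lam γ) <;> simp
  refine inv_mul_le_of_le_mul₀ S.C_nonneg (norm_nonneg _) ?_
  calc ∑ γ ∈ A, |lam γ| ≤ ‖∑ γ ∈ A, lam γ • BD.evalS S γ‖ * ‖x‖ :=
        sum_abs_le_opNorm_mul A lam _ x hx
    _ ≤ ‖∑ γ ∈ A, lam γ • BD.evalS S γ‖ * S.C := by gcongr
    _ = S.C * ‖∑ γ ∈ A, lam γ • BD.evalS S γ‖ := mul_comm _ _
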